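/- The tree T̄ produced by Algorithm 1, applied to a set Σ of unary XFDs and an input tree T complete with respect to P_Σ, is complete with respect to P_Σ (every path instance over a path of P_Σ in T̄ is complete, i.e. T̄ equals its minimal extension with respect to P_Σ). -/

import Mathlib

/-! Common framework for strong functional dependencies in XML (XFDs).

* Labels: element labels `elem n`, attribute names `attr n`, and the text
  symbol `text` (= `S`).  The distinguished label `root` is kept implicit:
  a path `root.l₁.….l_n` is represented by the list `[l₁,…,l_n]`, so the
  path `root` itself is `[]`. -/

inductive Lab where
  | elem (n : ℕ)
  | attr (n : ℕ)
  | text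
deriving DecidableEq

/-- A path (the implicit leading label `root` is omitted). -/
abbrev XPath := List Lab

/-- `Last(p) ∈ E` (the label `root` of the root path counts as an element label). -/
def LastIsElem (p : XPath) : Prop :=
  p = [] ∨ ∃ n, p.getLast? = some (Lab.elem n)

/-- `Last(p) ∈ A`. -/
def LastIsAttr (p : XPath) : Prop :=
  ∃ n, p.getLast? = some (Lab.attr n)

/-- `meet p q` is the maximal common prefix `p ∩ q` of two paths
    (`[]`, i.e. `root`, if they diverge immediately). -/
def meet : XPath → XPath → XPath
  | a :: as, b :: bs => if a = b then a :: meet as bs else []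
  | _, _ => []

/-- Values of nodes: strings (for attribute and text nodes), node identities
    (element nodes are compared by node identity), and marked nulls
    (distinct marked nulls have distinct values). -/
inductive Val where
  | str (s : String)
  | node (v : ℕ)
  | null (v : ℕ)
deriving DecidableEq

/-- Comparison of values used by `DeleteSameAtts` (on strings it is `≤`). -/
def ValLE : Val → Val → Prop
  | Val.str a, Val.str b => a ≤ b
  | a, b => a = b

/-- An (extended) XML tree `T = (V, lab, ele, att, val, v_r)`, presented via a
    parent function.  Marked nulls are the nodes with `isNull`; a plain XML
    tree is one satisfying `NoNulls`. -/
structure XTree where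
  nodes : Finset ℕ
  root : ℕ
  root_mem : root ∈ nodes
  parent : ℕ → Option ℕ
  parent_root : parent root = none
  parent_mem : ∀ v ∈ nodes, v ≠ root → ∃ u ∈ nodes, parent v = some u
  depth : ℕ → ℕ
  depth_parent : ∀ v u, parent v = some u → depth v = depth u + 1
  lab : ℕ → Lab
  isNull : ℕ → Prop
  root_not_null : ¬ isNull root
  val : ℕ → Val
  val_root : val root = Val.node root
  val_elem : ∀ v ∈ nodes, v ≠ root → (∃ n, lab v = Lab.elem n) → ¬ isNull v →
      val v = Val.node v
  val_null : ∀ v ∈ nodes, isNull v → val v = Val.null v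
  val_str : ∀ v ∈ nodes, v ≠ root →
      (lab v = Lab.text ∨ ∃ n, lab v = Lab.attr n) → ¬ isNull v →
      ∃ s, val v = Val.str s

/-- A plain XML tree: no marked nulls. -/
def NoNulls (T : XTree) : Prop := ∀ v, ¬ T.isNull v

/-- `Chain T v p vs` : `vs` is a downward chain of nodes hanging below `v`
    whose labels spell the path `p`. -/
inductive Chain (T : XTree) : ℕ → XPath → List ℕ → Prop
  | nil (v : ℕ) : Chain T v [] []
  | cons {v : ℕ} {l : Lab} {p : XPath} {w : ℕ} {ws : List ℕ} :
      w ∈ T.nodes → T.parent w = some v → T.lab w = l → Chain T w p ws →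
      Chain T v (l :: p) (w :: ws)

/-- `vs` is (the non-root part of) a path instance over the path `p` in `T`. -/
def PathInst (T : XTree) (p : XPath) (vs : List ℕ) : Prop :=
  Chain T T.root p vs

/-- The final node of the path instance `vs` (the root for the empty instance). -/
def endNode (T : XTree) (vs : List ℕ) : ℕ :=
  (T.root :: vs).getLast (by simp)

/-- `N(p)` : the set of final nodes of path instances over `p` in `T`. -/
def Nset (T : XTree) (p : XPath) : Set ℕ :=
  {v | ∃ vs, PathInst T p vs ∧ endNode T vs = v}

/-- `Nodes(x, p)` : final nodes of path instances over `p` passing through `x`. -/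
def NodesOf (T : XTree) (x : ℕ) (p : XPath) : Set ℕ :=
  {w | ∃ vs, PathInst T p vs ∧ endNode T vs = w ∧ x ∈ T.root :: vs}

/-- The node at depth `k` on the path instance `vs` (depth `0` is the root). -/
def nodeAt (T : XTree) (vs : List ℕ) (k : ℕ) : ℕ :=
  (T.root :: vs).getD k T.root

/-- An XML functional dependency `p₁, …, p_k → q`. -/
structure XFD where
  lhs : List XPath
  rhs : XPath

/-- The final nodes of two distinct path instances of the r.h.s. trigger the
    XFD condition: one of them is a null, or their values differ. -/
def PairTriggers (T : XTree) (a b : ℕ) : Prop :=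
  T.isNull a ∨ T.isNull b ∨ T.val a ≠ T.val b

/-- The condition required of a single l.h.s. path `p` towards the XFD `… → q`
    for the two path instances `vs`, `vs'` of `q`:  with `x`/`y` the unique
    nodes of the instances lying in `N(p ∩ q)`, if `Last(p) ∈ E` then `x ≠ y`,
    and otherwise no null lies in `Nodes(x,p)` or `Nodes(y,p)` and
    `val(Nodes(x,p)) ∩ val(Nodes(y,p)) = ∅`. -/
def SatOne (T : XTree) (p q : XPath) (vs vs' : List ℕ) : Prop :=
  (LastIsElem p ∧
    nodeAt T vs (meet p q).length ≠ nodeAt T vs' (meet p q).length) ∨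
  (¬ LastIsElem p ∧
    (∀ w ∈ NodesOf T (nodeAt T vs (meet p q).length) p, ¬ T.isNull w) ∧
    (∀ w ∈ NodesOf T (nodeAt T vs' (meet p q).length) p, ¬ T.isNull w) ∧
    (∀ a ∈ NodesOf T (nodeAt T vs (meet p q).length) p,
      ∀ b ∈ NodesOf T (nodeAt T vs' (meet p q).length) p, T.val a ≠ T.val b))

/-- Strong satisfaction of an XFD in a complete (extended) XML tree. -/
def Satisfies (T : XTree) (σ : XFD) : Prop :=
  (∃ p ∈ σ.lhs, p = σ.rhs) ∨
  ∀ vs vs', PathInst T σ.rhs vs → PathInst T σ.rhs vs' → vs ≠ vs' →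
    PairTriggers T (endNode T vs) (endNode T vs') →
    ∃ p ∈ σ.lhs, SatOne T p σ.rhs vs vs'

/-- `(T, P)` is consistent. -/
def Consistent (T : XTree) (P : Set XPath) : Prop :=
  (∀ p ∈ P, ∀ q ∈ P, ∀ i : Fin p.length,
      q.getLast? = some (p.get i) → q = p.take (i.1 + 1)) ∧
  (∀ v2 ∈ T.nodes, ∀ v1, T.parent v2 = some v1 →
    ∃ p ∈ P, ∃ j : Fin p.length, p.get j = T.lab v2 ∧
      (v1 = T.root ∨ ∃ i : Fin p.length, i.1 < j.1 ∧ p.get i = T.lab v1))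

/-- `TP` is a minimal extension `T_P` of `T` with respect to the set of paths
    `P` : it extends `T` by marked nulls only, every node whose label occurs
    in a path `p ∈ P` lies on a (complete) path instance over `p`, and every
    added null lies on a path instance over some `p ∈ P`. -/
structure IsMinExt (T : XTree) (P : Set XPath) (TP : XTree) : Prop where
  nodes_subset : ∀ v ∈ T.nodes, v ∈ TP.nodes
  root_eq : TP.root = T.root
  old_not_null : ∀ v ∈ T.nodes, ¬ TP.isNull v
  new_null : ∀ v ∈ TP.nodes, v ∉ T.nodes → TP.isNull v
  parent_eq : ∀ v ∈ T.nodes, TP.parent v = T.parent v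
  lab_eq : ∀ v ∈ T.nodes, TP.lab v = T.lab v
  val_eq : ∀ v ∈ T.nodes, TP.val v = T.val v
  complete : ∀ v ∈ TP.nodes, v ≠ TP.root → ∀ p ∈ P, TP.lab v ∈ p →
      ∃ vs, PathInst TP p vs ∧ v ∈ vs
  minimal : ∀ v ∈ TP.nodes, v ∉ T.nodes → ∃ p ∈ P, ∃ vs, PathInst TP p vs ∧ v ∈ vs

/-- `T` is complete w.r.t. `P` : `(T, P)` is consistent and `T = T_P`. -/
def CompleteWrt (T : XTree) (P : Set XPath) : Prop :=
  Consistent T P ∧ IsMinExt T P T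

/-- Derivability of an XFD from a set of XFDs using axioms A1–A8. -/
inductive Derives (Sg : Set XFD) : XFD → Prop
  | mem {σ : XFD} : σ ∈ Sg → Derives Sg σ
  | A1 {ps : List XPath} {p : XPath} : p ∈ ps → Derives Sg ⟨ps, p⟩
  | A2 {ps : List XPath} {q p : XPath} :
      Derives Sg ⟨ps, q⟩ → Derives Sg ⟨p :: ps, q⟩
  | A3 {ps : List XPath} {q s : XPath} :
      Derives Sg ⟨ps, q⟩ → Derives Sg ⟨[q], s⟩ → Derives Sg ⟨ps, s⟩
  | A4 {ps : List XPath} {q p : XPath} :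
      Derives Sg ⟨ps, q⟩ → (∀ pi ∈ ps, meet pi q = []) → Derives Sg ⟨[p], q⟩
  | A5 {p q p' : XPath} :
      Derives Sg ⟨[p], q⟩ → meet p q <+: p' → (p' <+: p ∨ p' <+: q) →
      Derives Sg ⟨[p'], q⟩
  | A6 {p q : XPath} : LastIsElem p → q <+: p → Derives Sg ⟨[p], q⟩
  | A7 {q : XPath} : LastIsAttr q → Derives Sg ⟨[q.dropLast], q⟩
  | A8 {p : XPath} : Derives Sg ⟨[p], []⟩

/-- A set of unary XFDs `r → s` is represented as a set of pairs `(r, s)`;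
    this turns it into a set of `XFD`s. -/
def toXFDs (Sg : Set (XPath × XPath)) : Set XFD :=
  {σ : XFD | ∃ rs ∈ Sg, σ = ⟨[rs.1], rs.2⟩}

/-- `P_Σ` : the set of paths appearing on either side of an XFD in `Σ`. -/
def PathsOf (Sg : Set (XPath × XPath)) : Set XPath :=
  {t | ∃ u, (t, u) ∈ Sg ∨ (u, t) ∈ Sg}

/-- `P⁺` as computed by Algorithm 2 on input `Σ` (unary XFDs) and a path `p`:
    the closure of `{p, root}` (together with `Anc(p)` when `Last(p) ∈ E`, and
    attribute extensions of all these) under the rules of the repeat loop. -/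
inductive PPlus (Sg : Set (XPath × XPath)) (p : XPath) : XPath → Prop
  | self : PPlus Sg p p
  | rt : PPlus Sg p []
  | anc {q : XPath} : LastIsElem p → q <+: p → q ≠ p → PPlus Sg p q
  | attSelf (a : ℕ) : PPlus Sg p (p ++ [Lab.attr a])
  | attRoot (a : ℕ) : PPlus Sg p [Lab.attr a]
  | attAnc {q : XPath} (a : ℕ) :
      LastIsElem p → q <+: p → q ≠ p → PPlus Sg p (q ++ [Lab.attr a])
  | ruleVia {r s p1 : XPath} : (r, s) ∈ Sg → PPlus Sg p p1 →
      meet r s <+: p1 → (p1 <+: r ∨ p1 <+: s) → PPlus Sg p s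
  | ruleRoot {r s : XPath} : (r, s) ∈ Sg → meet r s = [] → PPlus Sg p s
  | addAnc {r s q : XPath} : (r, s) ∈ Sg → PPlus Sg p s → LastIsElem s →
      q <+: s → q ≠ s → PPlus Sg p q
  | addAtt {r s : XPath} (a : ℕ) : (r, s) ∈ Sg → PPlus Sg p s → LastIsElem s →
      PPlus Sg p (s ++ [Lab.attr a])

/-- The set of unary XFDs `{p → q : q ∈ P⁺}`. -/
def PPlusFDs (Sg : Set (XPath × XPath)) (p : XPath) : Set (XPath × XPath) :=
  {rs | rs.1 = p ∧ PPlus Sg p rs.2}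

/-- One step of Algorithm 1 of the first kind (`Last(q) ∉ E`): choose
    `p → q ∈ Σ`, nodes `v1, v2 ∈ N(p)` with equal values and `v3, v4 ∈ N(q)`
    with `val v3 < val v4`, and set `val v4 := val v3`. -/
def ValStep (Sg : Set (XPath × XPath)) (T T' : XTree) : Prop :=
  ∃ pq ∈ Sg, ¬ LastIsElem pq.2 ∧
  ∃ v1 ∈ Nset T pq.1, ∃ v2 ∈ Nset T pq.1, T.val v1 = T.val v2 ∧
  ∃ v3 ∈ Nset T pq.2, ∃ v4 ∈ Nset T pq.2,
    (∃ s3 s4 : String, T.val v3 = Val.str s3 ∧ T.val v4 = Val.str s4 ∧ s3 < s4) ∧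
    T'.nodes = T.nodes ∧ T'.root = T.root ∧ T'.parent = T.parent ∧
    T'.lab = T.lab ∧ T'.isNull = T.isNull ∧
    T'.val = Function.update T.val v4 (T.val v3)

/-- One step of Algorithm 1 of the second kind (`Last(q) ∈ E`): choose
    `p → q ∈ Σ`, nodes `v1, v2 ∈ N(p)` with equal values and two path
    instances of `q` with distinct final nodes, agreeing exactly up to depth
    `c`; merge the second instance into the first (the merge map `φ`),
    deleting the merged nodes and (`DeleteSameAtts`) duplicate attribute
    children `A` of merged nodes, keeping for each deleted attribute node a
    twin with `ValLE`-smaller value. -/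
def MergeStep (Sg : Set (XPath × XPath)) (T T' : XTree) : Prop :=
  ∃ pq ∈ Sg, LastIsElem pq.2 ∧
  ∃ v1 ∈ Nset T pq.1, ∃ v2 ∈ Nset T pq.1, T.val v1 = T.val v2 ∧
  ∃ vs3 vs4 : List ℕ, PathInst T pq.2 vs3 ∧ PathInst T pq.2 vs4 ∧
    endNode T vs3 ≠ endNode T vs4 ∧
  ∃ c : ℕ, 0 < c ∧ c ≤ vs4.length ∧
    (T.root :: vs3).take c = (T.root :: vs4).take c ∧
    (∀ w ∈ (T.root :: vs4).drop c, w ∉ (T.root :: vs3).drop c) ∧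
  ∃ φ : ℕ → ℕ,
    (∀ i : ℕ, c ≤ i →
      ∀ (h3 : i < (T.root :: vs3).length) (h4 : i < (T.root :: vs4).length),
        φ ((T.root :: vs4).get ⟨i, h4⟩) = (T.root :: vs3).get ⟨i, h3⟩) ∧
    (∀ v, v ∉ (T.root :: vs4).drop c → φ v = v) ∧
  ∃ A : Set ℕ,
    (∀ w ∈ A, w ∈ T.nodes ∧ (∃ a, T.lab w = Lab.attr a) ∧
      w ∉ (T.root :: vs4).drop c ∧
      ∃ w', w' ∈ T.nodes ∧ w' ∉ A ∧ w' ∉ (T.root :: vs4).drop c ∧ w' ≠ w ∧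
        T.lab w' = T.lab w ∧
        Option.map φ (T.parent w') = Option.map φ (T.parent w) ∧
        ValLE (T.val w') (T.val w)) ∧
    (∀ v : ℕ, v ∈ T'.nodes ↔
        (v ∈ T.nodes ∧ v ∉ (T.root :: vs4).drop c ∧ v ∉ A)) ∧
    T'.root = T.root ∧
    (∀ v ∈ T'.nodes, T'.parent v = Option.map φ (T.parent v)) ∧
    (∀ v ∈ T'.nodes, T'.lab v = T.lab v) ∧
    (∀ v ∈ T'.nodes, T'.val v = T.val v) ∧
    (∀ v ∈ T'.nodes, (T'.isNull v ↔ T.isNull v)) ∧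
    (∀ w ∈ T'.nodes, ∀ w' ∈ T'.nodes, (∃ a, T.lab w = Lab.attr a) →
      T.lab w' = T.lab w →
      Option.map φ (T.parent w') = Option.map φ (T.parent w) → w' = w)

/-- A single step of Algorithm 1 (the chase). -/
def ChaseStep (Sg : Set (XPath × XPath)) (T T' : XTree) : Prop :=
  ValStep Sg T T' ∨ MergeStep Sg T T'

/-- `Tb` is an output of Algorithm 1 on input `Σ` and `T`: reachable from `T`
    by chase steps, with no further step applicable. -/
def ChaseResult (Sg : Set (XPath × XPath)) (T Tb : XTree) : Prop :=
  Relation.ReflTransGen (ChaseStep Sg) T Tb ∧ ∀ T'', ¬ ChaseStep Sg Tb T''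

/-- `T` contains exactly two (distinct) path instances over `q`. -/
def ExactlyTwoInsts (T : XTree) (q : XPath) : Prop :=
  ∃ vs1 vs2, vs1 ≠ vs2 ∧ PathInst T q vs1 ∧ PathInst T q vs2 ∧
    ∀ vs, PathInst T q vs → vs = vs1 ∨ vs = vs2

/-- `T` contains exactly one path instance over `q`. -/
def ExactlyOneInst (T : XTree) (q : XPath) : Prop :=
  ∃ vs, PathInst T q vs ∧ ∀ vs', PathInst T q vs' → vs' = vs

/-- The tree `T₀` used in Case 1 (`Last(p) ∉ E`): complete w.r.t. `P_Σ`,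
    with exactly two path instances of every path of `P_Σ` other than `root`,
    the two final nodes of the instances of `p` having equal values and the
    final nodes of the two instances of every other path having distinct
    values. -/
def IsT0 (Sg : Set (XPath × XPath)) (p : XPath) (T : XTree) : Prop :=
  NoNulls T ∧ CompleteWrt T (PathsOf Sg) ∧
  (∀ q ∈ PathsOf Sg, q ≠ [] → ExactlyTwoInsts T q) ∧
  (∀ vs1 vs2, PathInst T p vs1 → PathInst T p vs2 →
      T.val (endNode T vs1) = T.val (endNode T vs2)) ∧
  (∀ q ∈ PathsOf Sg, q ≠ p → ∀ vs1 vs2, PathInst T q vs1 → PathInst T q vs2 →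
      vs1 ≠ vs2 → T.val (endNode T vs1) ≠ T.val (endNode T vs2))

/-- The tree `T₁` used in Case 2 (`Last(p) ∈ E`): complete w.r.t. `P_Σ`, with
    exactly one path instance of `p`, of each prefix of `p` and of each
    attribute path (in `P_Σ`) whose parent is a prefix of `p`, exactly two
    path instances of every other path of `P_Σ`, and all node values
    distinct. -/
def IsT1 (Sg : Set (XPath × XPath)) (p : XPath) (T : XTree) : Prop :=
  NoNulls T ∧ CompleteWrt T (PathsOf Sg) ∧
  (∀ q : XPath, q <+: p → ExactlyOneInst T q) ∧
  (∀ q ∈ PathsOf Sg, LastIsAttr q → q.dropLast <+: p → ExactlyOneInst T q) ∧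
  (∀ q ∈ PathsOf Sg, q ≠ [] →
      ¬ (q <+: p ∨ (LastIsAttr q ∧ q.dropLast <+: p)) → ExactlyTwoInsts T q) ∧
  (∀ v ∈ T.nodes, ∀ w ∈ T.nodes, T.val v = T.val w → v = w)

section ChainLemmas
variable {T : XTree}

theorem chain_length {a r ws} (h : Chain T a r ws) : ws.length = r.length := by
  induction h <;> simp [*]

theorem chain_nodes {a r ws} (h : Chain T a r ws) : ∀ w ∈ ws, w ∈ T.nodes := by
  induction h with
  | nil => simp
  | cons hw hp hl hc ih =>
      intro x hx
      rcases List.mem_cons.1 hx with rfl | hx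
      · exact hw
      · exact ih x hx

theorem chain_parent {a r ws} (h : Chain T a r ws) :
    ∀ i (hi : i < ws.length),
      T.parent (ws[i]) = some ((a :: ws)[i]'(by simp; omega)) := by
  induction h with
  | nil => intro i hi; simp at hi
  | cons hw hp hl hc ih =>
      intro i hi
      match i with
      | 0 => simpa using hp
      | (j+1) =>
          simp only [List.getElem_cons_succ]
          exact ih j (by simpa using hi)

theorem chain_label {a r ws} (h : Chain T a r ws) :
    ∀ i (hi : i < ws.length), T.lab (ws[i]) = r[i]'(by rw [← chain_length h]; omega) := by
  induction h with
  | nil => intro i hi; simp at hi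
  | cons hw hp hl hc ih =>
      intro i hi
      match i with
      | 0 => simpa using hl
      | (j+1) =>
          simp only [List.getElem_cons_succ]
          exact ih j (by simpa using hi)

theorem chain_depth {a r ws} (h : Chain T a r ws) :
    ∀ i (hi : i < ws.length), T.depth (ws[i]) = T.depth a + i + 1 := by
  induction h with
  | nil => intro i hi; simp at hi
  | cons hw hp hl hc ih =>
      intro i hi
      match i with
      | 0 => simpa using T.depth_parent _ _ hp
      | (j+1) =>
          simp only [List.getElem_cons_succ]
          rw [ih j (by simpa using hi), T.depth_parent _ _ hp]
          omega

theorem chain_take {a r ws} (h : Chain T a r ws) (n : ℕ) :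
    Chain T a (r.take n) (ws.take n) := by
  induction h generalizing n with
  | nil => simpa using Chain.nil _
  | cons hw hp hl hc ih =>
      match n with
      | 0 => simpa using Chain.nil _
      | (m+1) => exact Chain.cons hw hp hl (ih m)

theorem chain_drop {a r ws} (h : Chain T a r ws) (n : ℕ) (hn : n ≤ ws.length) :
    Chain T ((a :: ws)[n]'(by simp; omega)) (r.drop n) (ws.drop n) := by
  induction h generalizing n with
  | nil => simpa using Chain.nil _
  | cons hw hp hl hc ih =>
      match n with
      | 0 => simpa using Chain.cons hw hp hl hc
      | (m+1) =>
          simpa using ih m (by simpa using hn)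

theorem chain_append {a r ws s zs} (h : Chain T a r ws)
    (h2 : Chain T ((a :: ws).getLast (by simp)) s zs) :
    Chain T a (r ++ s) (ws ++ zs) := by
  induction h with
  | nil => simpa using h2
  | cons hw hp hl hc ih =>
      refine Chain.cons hw hp hl (ih ?_)
      simpa [List.getLast_cons] using h2

theorem lastIdx (a : ℕ) (ws : List ℕ) :
    (a :: ws).getLast (by simp) = (a :: ws)[ws.length]'(by simp) := by
  rw [List.getLast_eq_getElem]
  simp

theorem chain_uniq {a r ws a' r' ws'} (h : Chain T a r ws) (h' : Chain T a' r' ws')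
    (hlen : ws.length = ws'.length) (hne : ws ≠ [])
    (hlast : ws.getLast hne = ws'.getLast (by intro hh; rw [hh] at hlen; simp at hlen; exact hne hlen)) :
    a = a' ∧ r = r' ∧ ws = ws' := by
  induction h generalizing a' r' ws' with
  | nil => exact absurd rfl hne
  | @cons v l p w rest hw hp hl hc ih =>
      cases h' with
      | nil => simp at hlen
      | @cons v' l' p' w' rest' hw' hp' hl' hc' =>
          have hlen2 : rest.length = rest'.length := by simpa using hlen
          by_cases hr : rest = []
          · subst hr
            have hr' : rest' = [] := List.length_eq_zero_iff.1 (by simpa using hlen2.symm)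
            subst hr'
            simp only [List.getLast_singleton] at hlast
            subst hlast
            rw [hp] at hp'
            cases hp'
            cases hc; cases hc'
            simp [← hl, ← hl']
          · have hr' : rest' ≠ [] := by
              intro hh; rw [hh] at hlen2; simp at hlen2; exact hr hlen2
            have hlast2 : rest.getLast hr = rest'.getLast hr' := by
              rwa [List.getLast_cons hr, List.getLast_cons hr'] at hlast
            obtain ⟨he1, he2, he3⟩ := ih hc' hlen2 hr hlast2
            subst he1; subst he2; subst he3
            rw [hp] at hp'
            cases hp'
            simp [← hl, ← hl']

end ChainLemmas

section MoreLemmas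
variable {T : XTree}

theorem chain_depth' {a r ws} (h : Chain T a r ws) :
    ∀ i (hi : i < (a :: ws).length), T.depth ((a :: ws)[i]) = T.depth a + i := by
  intro i hi
  match i with
  | 0 => simp
  | (j+1) => simpa [Nat.add_assoc] using chain_depth h j (by simpa using hi)

theorem getLast_cons_take (a : ℕ) (l : List ℕ) (m : ℕ) (hm : m ≤ l.length) :
    (a :: l.take m).getLast (by simp) = (a :: l)[m]'(by simp; omega) := by
  rw [lastIdx]
  have hlen : (l.take m).length = m := by simp [hm]
  match m with
  | 0 => simp [hlen]
  | (j+1) =>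
      have hj : j < l.length := by omega
      simp [hlen, List.getElem_take]

theorem chain_congr {T' : XTree} (hn : T'.nodes = T.nodes) (hp : T'.parent = T.parent)
    (hl : T'.lab = T.lab) {a r ws} (h : Chain T a r ws) : Chain T' a r ws := by
  induction h with
  | nil => exact Chain.nil _
  | cons hw hpp hll hc ih =>
      exact Chain.cons (by rw [hn]; exact hw) (by rw [hp]; exact hpp) (by rw [hl]; exact hll) ih

theorem drop_getElem_cons (l : XPath) (k : ℕ) (hk : k < l.length) :
    l.drop k = l[k] :: l.drop (k+1) := by
  exact List.drop_eq_getElem_cons hk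

end MoreLemmas

theorem valstep_preserves {Sg : Set (XPath × XPath)} {T T' : XTree} {P : Set XPath}
    (hT : CompleteWrt T P) (h : ValStep Sg T T') : CompleteWrt T' P := by
  obtain ⟨⟨hc1, hc2⟩, hext⟩ := hT
  obtain ⟨pq, hpq, hle, v1, h1, v2, h2, h12, v3, h3, v4, h4, hstr, hn, hr, hp, hl, hnl, hv⟩ := h
  have hcg : ∀ a r ws, Chain T a r ws → Chain T' a r ws := fun a r ws hh =>
    chain_congr hn hp hl hh
  refine ⟨⟨hc1, ?_⟩, ?_⟩
  · intro w2 hw2 w1 hpw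
    rw [hn] at hw2
    rw [hp] at hpw
    obtain ⟨p, hpP, j, hj1, hj2⟩ := hc2 w2 hw2 w1 hpw
    exact ⟨p, hpP, j, by rw [hl]; exact hj1, by rw [hl, hr]; exact hj2⟩
  · refine ⟨fun v hv => hv, rfl, ?_, fun v hv hv' => absurd hv hv', fun v _ => rfl,
      fun v _ => rfl, fun v _ => rfl, ?_, fun v hv hv' => absurd hv hv'⟩
    · intro v hv
      rw [hnl]
      exact hext.old_not_null v (by rwa [hn] at hv)
    · intro v hv hvr p hpP hlabp
      rw [hn] at hv
      obtain ⟨vs, hvs, hmem⟩ := hext.complete v hv (by rwa [hr] at hvr) p hpP (by rwa [hl] at hlabp)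
      exact ⟨vs, by show Chain T' T'.root p vs; rw [hr]; exact hcg _ _ _ hvs, hmem⟩

theorem take_concat_self (r : XPath) (m : ℕ) (h : r.length = m + 1) :
    r.take m ++ [r[m]'(by omega)] = r := by
  conv_rhs => rw [← List.take_append_drop m r]
  congr 1
  rw [drop_getElem_cons r m (by omega), List.drop_eq_nil_of_le (by omega)]

theorem merge_preserves {Sg : Set (XPath × XPath)} {T T' : XTree} {P : Set XPath}
    (hT : CompleteWrt T P) (h : MergeStep Sg T T') : CompleteWrt T' P := by
  obtain ⟨⟨hc1, hc2⟩, hext⟩ := hT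
  obtain ⟨pq, hpq, hlelem, v1, h1, v2, h2, h12, vs3, vs4, hI3, hI4, hend34, c, hc0, hcle,
    htake, hdisj, φ, hφget0, hφid, A, hA, hTN, hrootT', hpar, hlab, hval, hnull, huniqA⟩ := h
  have hI3' : Chain T T.root pq.2 vs3 := hI3
  have hI4' : Chain T T.root pq.2 vs4 := hI4
  have hlen3 : vs3.length = pq.2.length := chain_length hI3'
  have hlen4 : vs4.length = pq.2.length := chain_length hI4'
  have hlen34 : vs3.length = vs4.length := by omega
  have hdepth4 : ∀ i (hi : i < (T.root :: vs4).length),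
      T.depth ((T.root :: vs4)[i]) = T.depth T.root + i := chain_depth' hI4'
  have hdepth3 : ∀ i (hi : i < (T.root :: vs3).length),
      T.depth ((T.root :: vs3)[i]) = T.depth T.root + i := chain_depth' hI3'
  -- membership in the deleted part gives a position ≥ c
  have hnotD : ∀ z ∈ (T.root :: vs4).drop c, ∃ m, c ≤ m ∧
      ∃ hm : m < (T.root :: vs4).length, z = (T.root :: vs4)[m] := by
    intro z hz
    obtain ⟨i, hi, hzi⟩ := List.getElem_of_mem hz
    refine ⟨c + i, by omega, by simp at hi ⊢; omega, ?_⟩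
    rw [← hzi, List.getElem_drop]
  have hmemD : ∀ m (hcm : c ≤ m) (hm : m < (T.root :: vs4).length),
      (T.root :: vs4)[m] ∈ (T.root :: vs4).drop c := by
    intro m hcm hm
    have : ((T.root :: vs4).drop c)[m - c]'(by simp at hm ⊢; omega) = (T.root :: vs4)[m] := by
      rw [List.getElem_drop]; congr 1; omega
    rw [← this]; exact List.getElem_mem _
  have hmemD3 : ∀ m (hcm : c ≤ m) (hm : m < (T.root :: vs3).length),
      (T.root :: vs3)[m] ∈ (T.root :: vs3).drop c := by
    intro m hcm hm
    have : ((T.root :: vs3).drop c)[m - c]'(by simp at hm ⊢; omega) = (T.root :: vs3)[m] := by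
      rw [List.getElem_drop]; congr 1; omega
    rw [← this]; exact List.getElem_mem _
  -- a node of positive depth is not the root; positions are determined by depth
  have hposD : ∀ z ∈ (T.root :: vs4).drop c, T.depth z ≠ T.depth T.root + 0 ∧
      ∀ m (hm : m < (T.root :: vs4).length), z = (T.root :: vs4)[m] → c ≤ m := by
    intro z hz
    obtain ⟨m0, hm0c, hm0, hzm0⟩ := hnotD z hz
    constructor
    · rw [hzm0, hdepth4 m0 hm0]; omega
    · intro m hm hzm
      have := hdepth4 m hm
      rw [← hzm, hzm0, hdepth4 m0 hm0] at this
      omega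
  -- φ on positions of the merged instance
  have hφ_get : ∀ m (hm : m < (T.root :: vs4).length),
      φ ((T.root :: vs4)[m]) = (T.root :: vs3)[m]'(by simp at hm ⊢; omega) := by
    intro m hm
    by_cases hcm : c ≤ m
    · have h3 : m < (T.root :: vs3).length := by simp at hm ⊢; omega
      have := hφget0 m hcm h3 hm
      simpa [List.get_eq_getElem] using this
    · push_neg at hcm
      have hzD : (T.root :: vs4)[m] ∉ (T.root :: vs4).drop c := by
        intro hz
        exact absurd ((hposD _ hz).2 m hm rfl) (by omega)
      rw [hφid _ hzD]
      have h3 : m < (T.root :: vs3).length := by simp at hm ⊢; omega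
      have ht4 : ((T.root :: vs4).take c)[m]'(by simp; omega) = (T.root :: vs4)[m] :=
        List.getElem_take ..
      have ht3 : ((T.root :: vs3).take c)[m]'(by simp at h3 ⊢; omega) = (T.root :: vs3)[m] :=
        List.getElem_take ..
      rw [← ht4, ← ht3]
      congr 1
      rw [htake]
  have hdepthφ : ∀ z, T.depth (φ z) = T.depth z := by
    intro z
    by_cases hz : z ∈ (T.root :: vs4).drop c
    · obtain ⟨m, hcm, hm, hzm⟩ := hnotD z hz
      have h3 : m < (T.root :: vs3).length := by simp at hm ⊢; omega
      rw [hzm, hφ_get m hm, hdepth3 m h3, hdepth4 m hm]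
    · rw [hφid _ hz]
  have hlabφ : ∀ z, T.lab (φ z) = T.lab z := by
    intro z
    by_cases hz : z ∈ (T.root :: vs4).drop c
    · obtain ⟨m, hcm, hm, hzm⟩ := hnotD z hz
      have hm1 : 1 ≤ m := by omega
      obtain ⟨j, rfl⟩ : ∃ j, m = j + 1 := ⟨m - 1, by omega⟩
      have hj4 : j < vs4.length := by simpa using hm
      have hj3 : j < vs3.length := by omega
      rw [hzm, hφ_get _ hm]
      simp only [List.getElem_cons_succ]
      rw [chain_label hI3' j hj3, chain_label hI4' j hj4]
    · rw [hφid _ hz]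
  have hrootD : T.root ∉ (T.root :: vs4).drop c := by
    intro hz
    obtain ⟨m, hcm, hm, hzm⟩ := hnotD _ hz
    have := hdepth4 m hm
    rw [← hzm] at this
    omega
  have hφroot : φ T.root = T.root := hφid _ hrootD
  -- positions of vs3 beyond c are not deleted
  have h3nD : ∀ m (hm : m < (T.root :: vs3).length), (T.root :: vs3)[m] ∉ (T.root :: vs4).drop c := by
    intro m hm hz
    obtain ⟨m', hcm', hm', hzm'⟩ := hnotD _ hz
    have hd3 := hdepth3 m hm
    have hd4 := hdepth4 m' hm'
    rw [← hzm'] at hd4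
    have hmm : m = m' := by omega
    exact hdisj _ hz (hmemD3 m (by omega) hm)
  -- transfer of upward (root-to-node) instances to T'
  have UP : ∀ n r (ws : List ℕ), ws.length = n → Chain T T.root r ws →
      ∀ v, (T.root :: ws).getLast (by simp) = v → v ∈ T'.nodes →
      ∃ ws', Chain T' T.root r ws' ∧ (T.root :: ws').getLast (by simp) = v := by
    intro n
    induction n using Nat.strong_induction_on with
    | _ n ih =>
      intro r ws hlen hch v hv hvT'
      rcases List.eq_nil_or_concat ws with rfl | ⟨ws0, w, rfl⟩
      · cases hch
        exact ⟨[], Chain.nil _, hv⟩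
      · simp only [List.concat_eq_append] at hlen hch hv
        have hvw : v = w := by simpa using hv.symm
        subst hvw
        have hnn : ws0.length + 1 = n := by simpa using hlen
        have hlenr : r.length = ws0.length + 1 := by rw [← chain_length hch]; simp
        have hn0lt : ws0.length < (ws0 ++ [v]).length := by simp
        have hn0lt' : ws0.length < (T.root :: (ws0 ++ [v])).length := by simp
        have hgw : (ws0 ++ [v])[ws0.length] = v := by simp
        set u := (T.root :: (ws0 ++ [v]))[ws0.length]'hn0lt' with hudef
        have hpv : T.parent v = some u := by
          have := chain_parent hch ws0.length hn0lt
          rwa [hgw] at this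
        have hlv : T.lab v = r[ws0.length]'(by omega) := by
          have := chain_label hch ws0.length hn0lt
          rwa [hgw] at this
        have hpv' : T'.parent v = some (φ u) := by
          rw [hpar v hvT', hpv]; rfl
        have hvne : v ≠ T'.root := by
          intro hh; rw [hh, T'.parent_root] at hpv'; cases hpv'
        obtain ⟨u', hu'T, hu'⟩ := T'.parent_mem v hvT' hvne
        have hφuT' : φ u ∈ T'.nodes := by
          rw [hpv'] at hu'; cases hu'; exact hu'T
        have hch0 : Chain T T.root (r.take ws0.length) ws0 := by
          have := chain_take hch ws0.length
          rwa [show (ws0 ++ [v]).take ws0.length = ws0 by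
            simpa using List.take_left ws0 [v]] at this
        have hu_last : (T.root :: ws0).getLast (by simp) = u := by
          rw [lastIdx, hudef]
          exact (List.getElem_append_left (as := T.root :: ws0) (bs := [v]) (by simp)).symm
        have hdu : T.depth u = T.depth T.root + ws0.length := by
          rw [hudef]; exact chain_depth' hch ws0.length (by simp)
        by_cases huD : u ∈ (T.root :: vs4).drop c
        · obtain ⟨m, hcm, hm, hum⟩ := hnotD _ huD
          have hn0m : ws0.length = m := by
            have h2 := hdepth4 m hm
            rw [← hum, hdu] at h2
            omega
          have hm3 : m < (T.root :: vs3).length := by simp at hm ⊢; omega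
          have hm4 : m ≤ vs4.length := by simpa using Nat.lt_succ_iff.1 hm
          have hm1 : 1 ≤ m := by omega
          have hws0ne : ws0 ≠ [] := by
            intro hh; rw [hh] at hn0m; simp at hn0m; omega
          have htlen : (vs4.take m).length = m := by rw [List.length_take]; omega
          have htne : vs4.take m ≠ [] := by
            intro hh; rw [hh] at htlen; simp at htlen; omega
          have hlast4 : (vs4.take m).getLast htne = u := by
            have h5 := getLast_cons_take T.root vs4 m hm4
            rw [List.getLast_cons htne] at h5
            rw [h5, ← hum]
          have hlast0 : ws0.getLast hws0ne = u := by
            have h6 := hu_last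
            rwa [List.getLast_cons hws0ne] at h6
          obtain ⟨-, hreq, -⟩ := chain_uniq hch0 (chain_take hI4' m)
            (by rw [htlen]; omega) hws0ne (by rw [hlast0, hlast4])
          have hlast3 : (T.root :: vs3.take m).getLast (by simp) = φ u := by
            rw [getLast_cons_take T.root vs3 m (by simpa using Nat.lt_succ_iff.1 hm3), hum,
              hφ_get m hm]
          obtain ⟨ws'', hws'', hlast''⟩ := ih m (by omega) (pq.2.take m) (vs3.take m)
            (by rw [List.length_take]; omega) (chain_take hI3' m) _ hlast3 hφuT'
          refine ⟨ws'' ++ [v], ?_, by simp⟩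
          have hstep : Chain T' ((T.root :: ws'').getLast (by simp)) [r[ws0.length]'(by omega)] [v] := by
            rw [hlast'']
            exact Chain.cons hvT' hpv' (by rw [hlab v hvT']; exact hlv) (Chain.nil v)
          have hap := chain_append hws'' hstep
          rw [← hreq] at hap
          rwa [take_concat_self r ws0.length hlenr] at hap
        · have hφu : φ u = u := hφid _ huD
          obtain ⟨ws'', hws'', hlast''⟩ := ih ws0.length (by omega) (r.take ws0.length) ws0 rfl
            hch0 _ hu_last (by rwa [hφu] at hφuT')
          refine ⟨ws'' ++ [v], ?_, by simp⟩
          have hstep : Chain T' ((T.root :: ws'').getLast (by simp)) [r[ws0.length]'(by omega)] [v] := by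
            rw [hlast'']
            refine Chain.cons hvT' ?_ (by rw [hlab v hvT']; exact hlv) (Chain.nil v)
            rw [hpv', hφu]
          have hap := chain_append hws'' hstep
          rwa [take_concat_self r ws0.length hlenr] at hap
  -- the `complete` field, proved below
  have hcomplete : ∀ v ∈ T'.nodes, v ≠ T'.root → ∀ p ∈ P, T'.lab v ∈ p →
      ∃ vs, PathInst T' p vs ∧ v ∈ vs := by
    intro v hv hvr p hpP hlabp
    have hvT : v ∈ T.nodes := ((hTN v).1 hv).1
    -- downward extension in T'
    have DOWN : ∀ n k, k + n = p.length → ∀ u w ws, u ∈ T'.nodes → w ∈ T.nodes → φ w = u →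
        T.depth w = T.depth T.root + k → Chain T w (p.drop k) ws →
        ∃ ws', Chain T' u (p.drop k) ws' := by
      intro n
      induction n with
      | zero =>
          intro k hk u w ws hu hw hφw hd hch
          refine ⟨[], ?_⟩
          rw [List.drop_eq_nil_of_le (by omega)]
          exact Chain.nil _
      | succ n ih =>
          intro k hk u w ws hu hwT hφw hd hch
          have hkp : k < p.length := by omega
          rw [drop_getElem_cons p k hkp] at hch
          cases hch with
          | @cons _ _ _ y ys hyN hpy hly hcy =>
            have FRESH : ∀ t, t ∈ T.nodes → t ∉ (T.root :: vs4).drop c → t ∉ A →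
                T.lab t = p[k] → T.depth t = T.depth T.root + (k+1) →
                Option.map φ (T.parent t) = some u →
                ∃ ws', Chain T' u (p.drop k) ws' := by
              intro t htT htD htA htl htd htp
              have htT' : t ∈ T'.nodes := (hTN t).2 ⟨htT, htD, htA⟩
              have htr : t ≠ T.root := by intro hh; rw [hh] at htd; omega
              obtain ⟨vsf, hvsf, htf⟩ := hext.complete t htT htr p hpP
                (by rw [htl]; exact List.getElem_mem hkp)
              have hvsf' : Chain T T.root p vsf := hvsf
              obtain ⟨i, hi, hif⟩ := List.getElem_of_mem htf
              have hik : i = k := by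
                have hdd := chain_depth hvsf' i hi
                rw [hif, htd] at hdd; omega
              subst hik
              have hk1 : i + 1 ≤ vsf.length := hi
              have hbelow : Chain T ((T.root :: vsf)[i+1]'(by simp; omega)) (p.drop (i+1))
                  (vsf.drop (i+1)) := chain_drop hvsf' (i+1) hk1
              rw [show ((T.root :: vsf)[i+1]'(by simp; omega)) = t from by
                simpa using hif] at hbelow
              have hφt : φ t = t := hφid _ htD
              obtain ⟨ws'', hws''⟩ := ih (i+1) (by omega) t t (vsf.drop (i+1)) htT' htT hφt htd hbelow
              refine ⟨t :: ws'', ?_⟩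
              rw [drop_getElem_cons p i hkp]
              refine Chain.cons htT' ?_ ?_ hws''
              · rw [hpar t htT']; exact htp
              · rw [hlab t htT']; exact htl
            have hdy : T.depth y = T.depth T.root + (k+1) := by
              rw [T.depth_parent y w hpy, hd]; omega
            by_cases hyD : y ∈ (T.root :: vs4).drop c
            · obtain ⟨m, hcm, hm, hym⟩ := hnotD y hyD
              have hmk : m = k + 1 := by
                have hdd := hdepth4 m hm; rw [← hym, hdy] at hdd; omega
              have hm1 : 1 ≤ m := by omega
              have hm3 : m < (T.root :: vs3).length := by simp at hm ⊢; omega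
              obtain ⟨j, rfl⟩ : ∃ j, m = j + 1 := ⟨m-1, by omega⟩
              have hj3 : j < vs3.length := by simpa using hm3
              have hj4 : j < vs4.length := by simpa using hm
              have hj3' : j < (T.root :: vs3).length := by simp; omega
              have hj4' : j < (T.root :: vs4).length := by simp; omega
              have haT : vs3[j] ∈ T.nodes := chain_nodes hI3' _ (List.getElem_mem hj3)
              have haD : vs3[j] ∉ (T.root :: vs4).drop c := by
                have := h3nD (j+1) hm3
                simpa using this
              have hφy : φ y = vs3[j] := by
                rw [hym, hφ_get _ hm]; simp
              have hla : T.lab (vs3[j]) = p[k] := by rw [← hφy, hlabφ]; exact hly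
              have hda : T.depth (vs3[j]) = T.depth T.root + (k+1) := by
                rw [← hφy, hdepthφ]; exact hdy
              have hpa : Option.map φ (T.parent (vs3[j])) = some u := by
                have hpa0 := chain_parent hI3' j hj3
                have hprev : φ ((T.root :: vs3)[j]'hj3') = (T.root :: vs3)[j]'hj3' :=
                  hφid _ (h3nD j hj3')
                have hpw4 := chain_parent hI4' j hj4
                have hyv : y = vs4[j] := by rw [hym]; simp
                rw [hyv] at hpy
                rw [hpy] at hpw4
                have hw4 : w = (T.root :: vs4)[j]'hj4' := (Option.some.inj hpw4)
                have hwphi : φ w = (T.root :: vs3)[j]'hj3' := by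
                  rw [hw4, hφ_get j hj4']
                rw [hpa0]
                simp only [Option.map_some]
                rw [hprev, ← hwphi, hφw]
              by_cases haA : vs3[j] ∈ A
              · obtain ⟨-, -, -, t, htT, htA, htD, -, htl, htp, -⟩ := hA _ haA
                refine FRESH t htT htD htA (by rw [htl]; exact hla) ?_ (by rw [htp]; exact hpa)
                obtain ⟨z, hz1, hz2⟩ := Option.map_eq_some_iff.1 (htp.trans hpa)
                have hzd : T.depth z = T.depth w := by
                  rw [← hdepthφ z, hz2, ← hφw, hdepthφ]
                rw [T.depth_parent t z hz1, hzd, hd]; omega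
              · exact FRESH _ haT haD haA hla hda hpa
            · by_cases hyA : y ∈ A
              · obtain ⟨-, -, -, t, htT, htA, htD, -, htl, htp, -⟩ := hA y hyA
                have hpyu : Option.map φ (T.parent y) = some u := by
                  rw [hpy]; simp [hφw]
                refine FRESH t htT htD htA (by rw [htl]; exact hly) ?_
                  (by rw [htp]; exact hpyu)
                obtain ⟨z, hz1, hz2⟩ := Option.map_eq_some_iff.1 (htp.trans hpyu)
                have hzd : T.depth z = T.depth w := by
                  rw [← hdepthφ z, hz2, ← hφw, hdepthφ]
                rw [T.depth_parent t z hz1, hzd, hd]; omega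
              · refine FRESH y hyN hyD hyA hly hdy ?_
                rw [hpy]; simp [hφw]
    -- assemble the full instance through v
    obtain ⟨vs, hvs, hvmem⟩ := hext.complete v hvT (by rwa [hrootT'] at hvr) p hpP
      (by rw [← hlab v hv]; exact hlabp)
    have hvs' : Chain T T.root p vs := hvs
    obtain ⟨j, hj, hvj⟩ := List.getElem_of_mem hvmem
    have hjp : j < p.length := by rw [← chain_length hvs']; exact hj
    have hlast : (T.root :: vs.take (j+1)).getLast (by simp) = v := by
      rw [getLast_cons_take _ _ (j+1) (by omega)]
      simpa using hvj
    obtain ⟨ws1, hws1, hlast1⟩ := UP (j+1) (p.take (j+1)) (vs.take (j+1))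
      (by rw [List.length_take]; omega) (chain_take hvs' (j+1)) v hlast hv
    have hvD : v ∉ (T.root :: vs4).drop c := ((hTN v).1 hv).2.1
    have hdv : T.depth v = T.depth T.root + (j+1) := by
      have := chain_depth hvs' j hj
      rw [hvj] at this
      omega
    have hbelow : Chain T v (p.drop (j+1)) (vs.drop (j+1)) := by
      have := chain_drop hvs' (j+1) (by omega)
      rwa [show ((T.root :: vs)[j+1]'(by simp; omega)) = v from by simpa using hvj] at this
    obtain ⟨ws2, hws2⟩ := DOWN (p.length - (j+1)) (j+1) (by omega) v v (vs.drop (j+1)) hv hvT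
      (hφid v hvD) hdv hbelow
    refine ⟨ws1 ++ ws2, ?_, ?_⟩
    · show Chain T' T'.root p (ws1 ++ ws2)
      rw [hrootT']
      have hap := chain_append hws1 (by rw [hlast1]; exact hws2)
      rwa [List.take_append_drop] at hap
    · have hws1ne : ws1 ≠ [] := by
        intro hh
        rw [hh] at hlast1
        simp at hlast1
        exact hvr (by rw [← hlast1, hrootT'])
      have hgl : ws1.getLast hws1ne = v := by
        have := hlast1
        rwa [List.getLast_cons hws1ne] at this
      exact List.mem_append_left _ (hgl ▸ List.getLast_mem hws1ne)
  refine ⟨⟨hc1, ?_⟩, ?_⟩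
  · -- consistency, second clause
    intro w2 hw2 w1 hpw
    have hw2T : w2 ∈ T.nodes := ((hTN w2).1 hw2).1
    have hw2r : w2 ≠ T'.root := by
      intro hh; rw [hh, T'.parent_root] at hpw; cases hpw
    obtain ⟨u', hu', hpu'⟩ := T'.parent_mem w2 hw2 hw2r
    have hw1T' : w1 ∈ T'.nodes := by rw [hpw] at hpu'; cases hpu'; exact hu'
    obtain ⟨u0, hu0, hpu0⟩ := T.parent_mem w2 hw2T (by rwa [hrootT'] at hw2r)
    have hφu0 : w1 = φ u0 := by
      have := hpar w2 hw2
      rw [hpw, hpu0] at this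
      simpa using this
    obtain ⟨p, hpP, j, hj1, hj2⟩ := hc2 w2 hw2T u0 hpu0
    refine ⟨p, hpP, j, by rw [hlab w2 hw2]; exact hj1, ?_⟩
    rcases hj2 with hj2 | ⟨i, hij, hi⟩
    · left; rw [hφu0, hj2, hφroot, hrootT']
    · right
      exact ⟨i, hij, by rw [hlab w1 hw1T', hφu0, hlabφ]; exact hi⟩
  · refine ⟨fun v hv => hv, rfl, ?_, fun v hv hv' => absurd hv hv', fun v _ => rfl,
      fun v _ => rfl, fun v _ => rfl, hcomplete, fun v hv hv' => absurd hv hv'⟩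
    intro v hv
    rw [hnull v hv]
    exact hext.old_not_null v ((hTN v).1 hv).1

/-- **Lemma `L:complete`.**
The tree `T̄` produced by Algorithm 1 from a set `Σ` of unary XFDs and an
input tree `T` complete w.r.t. `P_Σ` is itself complete w.r.t. `P_Σ`. -/
theorem chase_output_complete (Sg : Set (XPath × XPath)) (T Tb : XTree)
    (hT : CompleteWrt T (PathsOf Sg)) (h : ChaseResult Sg T Tb) :
    CompleteWrt Tb (PathsOf Sg) := by
  obtain ⟨hrtg, -⟩ := h
  induction hrtg with
  | refl => exact hT
  | tail hab hstep ih =>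
      rcases hstep with hs | hs
      · exact valstep_preserves ih hs
      · exact merge_preserves ih hs
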